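/- arXiv:2403.10577 — 2 statements merged into one kernel-verified Lean document; each statement's English description precedes it below -/
import Mathlib

section
/- The binomial Eulerian polynomial Ã_n(t) := 1 + t·Σ_{k=1}^n C(n,k)·A_k(t) equals Σ_{σ ∈ S̃_n} t^{exc(σ)+1}, where S̃_n is the set of decorated permutations of [n], exc(σ) counts positions i with σ_i > i for σ ≠ θ, and exc(θ) = −1. -/
open scoped Classical

/-- A decorated permutation of `[n]`, encoded as its one-line word
`w : Fin n → Fin (n+1)` (position `i` is the 1-based position `i+1`, value `0`
means no value): the nonzero entries are distinct, and every nonzero value is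
(the 1-based name of) a position carrying a nonzero entry.  Hence the nonzero
entries form a permutation of their set of positions. -/
def IsDecorated {n : ℕ} (w : Fin n → Fin (n + 1)) : Prop :=
  (∀ i j, (w i : ℕ) ≠ 0 → w i = w j → i = j) ∧
  (∀ i, (w i : ℕ) ≠ 0 → ∃ j : Fin n, (w j : ℕ) ≠ 0 ∧ (w i : ℕ) = (j : ℕ) + 1)

/-- The all-zero decorated permutation `θ`. -/
def isTheta {n : ℕ} (w : Fin n → Fin (n + 1)) : Prop := ∀ i, (w i : ℕ) = 0

/-- The number of excedances of a decorated permutation (positions `i` with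
`w_i > i`, in 1-based terms). -/
def dExc {n : ℕ} (w : Fin n → Fin (n + 1)) : ℕ :=
  (Finset.univ.filter (fun i : Fin n => (i : ℕ) + 1 < (w i : ℕ))).card

/-- `exc(w) + 1`, where `exc(θ) = -1`. -/
noncomputable def dExcP1 {n : ℕ} (w : Fin n → Fin (n + 1)) : ℕ :=
  if isTheta w then 0 else dExc w + 1

/-- The number of descents of the one-line word of a decorated permutation,
with respect to the order `0 < 1 < ⋯ < n`. -/
def dDes {n : ℕ} (w : Fin n → Fin (n + 1)) : ℕ :=
  ((Finset.range n).filter (fun i =>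
    ∃ h : i + 1 < n, (w ⟨i + 1, h⟩ : ℕ) < (w ⟨i, Nat.lt_of_succ_lt h⟩ : ℕ))).card

/-- The major index of the one-line word of a decorated permutation. -/
def dMaj {n : ℕ} (w : Fin n → Fin (n + 1)) : ℕ :=
  ∑ i ∈ (Finset.range n).filter (fun i =>
      ∃ h : i + 1 < n, (w ⟨i + 1, h⟩ : ℕ) < (w ⟨i, Nat.lt_of_succ_lt h⟩ : ℕ)), (i + 1)

/-- The number of excedances of `σ ∈ S_k`. -/
def excNum {k : ℕ} (σ : Equiv.Perm (Fin k)) : ℕ :=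
  (Finset.univ.filter (fun i : Fin k => (i : ℕ) < (σ i : ℕ))).card

/-!
A decorated permutation of `[n]` is the same thing as a subset `S ⊆ [n]` together with a
permutation of `S`, and transporting a permutation along the order isomorphism `Fin |S| ≃o S`
preserves its excedances. Hence the decorated permutations with support `S` contribute
`t·A_{|S|}(t)` when `S ≠ ∅`, while `θ` contributes `1`; grouping the supports by size produces
the binomial coefficients.
-/

open Finset Polynomial Equiv

namespace Equiv.Perm

variable {α β : Type*} [LinearOrder α] [LinearOrder β] [Fintype α] [Fintype β]

def excedances (σ : Perm α) : Finset α := {a | a < σ a}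

@[simp]
theorem mem_excedances {σ : Perm α} {a : α} : a ∈ σ.excedances ↔ a < σ a := by
  simp [excedances]

theorem card_excedances_permCongr (e : α ≃o β) (σ : Perm α) :
    #(e.toEquiv.permCongr σ).excedances = #σ.excedances := by
  refine card_nbij' e.symm e (fun b hb => ?_) (fun a ha => ?_) (fun b _ => by simp)
    (fun a _ => by simp)
  · simpa [← e.lt_iff_lt, permCongr_apply] using hb
  · simpa [permCongr_apply] using ha

theorem sum_excedances_eq_sum_excNum {M : Type*} [AddCommMonoid M] {k : ℕ}
    (h : Fintype.card α = k) (f : ℕ → M) :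
    ∑ σ : Perm α, f #σ.excedances = ∑ σ : Perm (Fin k), f (excNum σ) := by
  let e := Fintype.orderIsoFinOfCardEq α h
  rw [← (e.toEquiv.permCongr).sum_comp]
  simp only [card_excedances_permCongr]
  rfl

end Equiv.Perm

noncomputable def eulerianPoly (k : ℕ) : ℕ[X] := ∑ σ : Perm (Fin k), X ^ excNum σ

section DecoratedWord

variable {n : ℕ}

def wordSupport (w : Fin n → Fin (n + 1)) : Finset (Fin n) := {i | (w i : ℕ) ≠ 0}

theorem mem_wordSupport {w : Fin n → Fin (n + 1)} {i : Fin n} :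
    i ∈ wordSupport w ↔ (w i : ℕ) ≠ 0 := by
  simp [wordSupport]

theorem isTheta_iff_wordSupport_eq_empty {w : Fin n → Fin (n + 1)} :
    isTheta w ↔ wordSupport w = ∅ := by
  simp [isTheta, eq_empty_iff_forall_notMem, mem_wordSupport]

def decoratedWord {S : Finset (Fin n)} (σ : Perm S) : Fin n → Fin (n + 1) :=
  fun i => if hi : i ∈ S then (σ ⟨i, hi⟩ : Fin n).succ else 0

variable {S : Finset (Fin n)} (σ : Perm S)

theorem decoratedWord_of_mem {i : Fin n} (hi : i ∈ S) :
    decoratedWord σ i = (σ ⟨i, hi⟩ : Fin n).succ := dif_pos hi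

theorem decoratedWord_of_notMem {i : Fin n} (hi : i ∉ S) : decoratedWord σ i = 0 := dif_neg hi

theorem wordSupport_decoratedWord : wordSupport (decoratedWord σ) = S := by
  ext i
  by_cases hi : i ∈ S <;> simp [mem_wordSupport, decoratedWord, hi]

theorem isDecorated_decoratedWord : IsDecorated (decoratedWord σ) := by
  have hS : ∀ i, (decoratedWord σ i : ℕ) ≠ 0 ↔ i ∈ S := fun i => by
    rw [← mem_wordSupport, wordSupport_decoratedWord]
  refine ⟨fun i j hi hij => ?_, fun i hi => ?_⟩
  · have hi : i ∈ S := (hS i).1 hi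
    have hj : j ∈ S := (hS j).1 (hij ▸ (hS i).2 hi)
    rwa [decoratedWord_of_mem σ hi, decoratedWord_of_mem σ hj, Fin.succ_inj,
      Subtype.val_inj, σ.apply_eq_iff_eq, Subtype.mk.injEq] at hij
  · have hi := (hS i).1 hi
    refine ⟨σ ⟨i, hi⟩, (hS _).2 (σ ⟨i, hi⟩).2, ?_⟩
    rw [decoratedWord_of_mem σ hi, Fin.val_succ]

theorem decoratedWord_injective : Function.Injective (decoratedWord (S := S)) := by
  intro σ τ h
  ext ⟨i, hi⟩ : 2
  simpa [decoratedWord_of_mem _ hi] using congrFun h i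

theorem dExc_decoratedWord : dExc (decoratedWord σ) = #σ.excedances := by
  rw [← card_map (Function.Embedding.subtype (· ∈ S)), dExc]
  congr 1
  ext i
  by_cases hi : i ∈ S
  · simp [decoratedWord_of_mem σ hi, hi, ← Subtype.coe_lt_coe]
  · simp [decoratedWord_of_notMem σ hi, hi]

theorem dExcP1_decoratedWord :
    dExcP1 (decoratedWord σ) = if S = ∅ then 0 else #σ.excedances + 1 := by
  rw [dExcP1, isTheta_iff_wordSupport_eq_empty, wordSupport_decoratedWord, dExc_decoratedWord]
  congr

theorem IsDecorated.exists_decoratedWord_eq {w : Fin n → Fin (n + 1)} (hw : IsDecorated w) :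
    ∃ σ : Perm (wordSupport w), decoratedWord σ = w := by
  have hne : ∀ i : wordSupport w, w i ≠ 0 := fun i =>
    Fin.val_ne_zero_iff.1 (mem_wordSupport.1 i.2)
  have hmem : ∀ i : wordSupport w, (w i).pred (hne i) ∈ wordSupport w := by
    intro i
    obtain ⟨j, hj, hij⟩ := hw.2 i (mem_wordSupport.1 i.2)
    have : (w i).pred (hne i) = j := Fin.ext (by simp [hij])
    rwa [this, mem_wordSupport]
  let f : wordSupport w → wordSupport w := fun i => ⟨(w i).pred (hne i), hmem i⟩
  have hf : Function.Injective f := by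
    intro i j hij
    simp only [f, Subtype.mk.injEq, Fin.pred_inj] at hij
    exact Subtype.ext (hw.1 i j (mem_wordSupport.1 i.2) hij)
  refine ⟨Equiv.ofBijective f (Finite.injective_iff_bijective.1 hf), funext fun i => ?_⟩
  by_cases hi : i ∈ wordSupport w
  · simp [decoratedWord_of_mem _ hi, f]
  · rw [decoratedWord_of_notMem _ hi]
    exact Fin.ext (not_not.1 (mt mem_wordSupport.2 hi)).symm

theorem sum_isDecorated_wordSupport_eq {M : Type*} [AddCommMonoid M] (S : Finset (Fin n))
    (f : (Fin n → Fin (n + 1)) → M) :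
    ∑ w ∈ {w | IsDecorated w} with wordSupport w = S, f w = ∑ σ : Perm S, f (decoratedWord σ) := by
  symm
  refine sum_bij (fun σ _ => decoratedWord σ) (fun σ _ => ?_)
    (fun σ _ τ _ h => decoratedWord_injective h) (fun w hw => ?_) (fun _ _ => rfl)
  · simp [isDecorated_decoratedWord, wordSupport_decoratedWord]
  · simp only [mem_filter, mem_univ, true_and] at hw
    obtain ⟨hw, rfl⟩ := hw
    obtain ⟨σ, hσ⟩ := hw.exists_decoratedWord_eq
    exact ⟨σ, mem_univ _, hσ⟩

theorem sum_perm_X_pow_dExcP1_decoratedWord (S : Finset (Fin n)) :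
    ∑ σ : Perm S, (X : ℕ[X]) ^ dExcP1 (decoratedWord σ)
      = if #S = 0 then 1 else X * eulerianPoly #S := by
  simp only [dExcP1_decoratedWord, card_eq_zero]
  split_ifs with hS
  · subst hS
    simp
  · rw [eulerianPoly, mul_sum,
      ← Perm.sum_excedances_eq_sum_excNum (Fintype.card_coe S) (fun k => X * X ^ k)]
    simp only [pow_succ']
    rfl

end DecoratedWord

/-- The binomial Eulerian polynomial
`Ã_n(t) = 1 + t·Σ_{k=1}^n C(n,k)·A_k(t)` (with `A_k(t) = Σ_{π ∈ S_k} t^{exc π}`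
the Eulerian polynomial) equals `Σ_{σ ∈ S̃_n} t^{exc(σ)+1}`, the generating
function of decorated permutations of `[n]` by `exc + 1`, where `exc(θ) = -1`. -/
theorem binomial_eulerian_decorated (n : ℕ) :
    (1 : Polynomial ℕ) + Polynomial.X *
        ∑ k ∈ Finset.Icc 1 n, Polynomial.C (n.choose k) *
          ∑ σ : Equiv.Perm (Fin k), Polynomial.X ^ excNum σ
      = ∑ w ∈ Finset.univ.filter (fun w : Fin n → Fin (n + 1) => IsDecorated w),
          Polynomial.X ^ dExcP1 w := by
  rw [← sum_fiberwise _ wordSupport]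
  simp only [sum_isDecorated_wordSupport_eq, sum_perm_X_pow_dExcP1_decoratedWord]
  rw [← powerset_univ, sum_powerset_apply_card (fun k => if k = 0 then 1 else X * eulerianPoly k),
    card_univ, Fintype.card_fin, range_eq_Ico, sum_eq_sum_Ico_succ_bot (by omega : 0 < n + 1),
    zero_add, Ico_add_one_right_eq_Icc, mul_sum]
  refine congrArg₂ _ (by simp) (sum_congr rfl fun k hk => ?_)
  rw [if_neg (by grind), eulerianPoly, smul_eq_C_mul, mul_left_comm]
end

section
/- For every n ≥ 0, Σ_{(α,f) ∈ extended codes of length n} t^{ind(α,f)+1} = 1 + t·Σ_{k=1}^n C(n,k)·Σ_{(β,g) ∈ Code_k} t^{ind(β,g)}; i.e., extended codes of length n graded by index+1 are enumerated by the binomial Eulerian polynomial built from Stembridge-code enumerators. -/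
open scoped Classical

/-- The maximum finite value appearing in a sequence over `ℕ ∪ {∞}`
(`∞` contributes `0`). -/
def extMax {n : ℕ} (α : Fin n → ℕ∞) : ℕ := Finset.univ.sup fun i => (α i).toNat

/-- `(α, f)` is an extended code of length `n`: `α` is a sequence over
`ℕ ∪ {∞}`, each `k` with `1 ≤ k ≤ m` (`m` the maximum finite value) occurs at
least twice, and `1 ≤ f k ≤ (occurrences of k) - 1`; `f` vanishes outside
`[m]`.  Positions equal to `∞` are unrestricted. -/
def IsExtCode (n : ℕ) (α : Fin n → ℕ∞) (f : ℕ → ℕ) : Prop :=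
  (∀ k, 1 ≤ k → k ≤ extMax α →
      1 ≤ f k ∧ f k + 1 ≤ (Finset.univ.filter (fun i => α i = (k : ℕ∞))).card) ∧
  (∀ k, k = 0 ∨ extMax α < k → f k = 0)

/-- `ind(α,f) + 1`, where the index of an extended code is the sum of its
marks, and the index of the all-`∞` code is `-1`. -/
noncomputable def extIndP1 {n : ℕ} (α : Fin n → ℕ∞) (f : ℕ → ℕ) : ℕ :=
  if ∀ i, α i = ⊤ then 0 else (∑ k ∈ Finset.Icc 1 (extMax α), f k) + 1

/-- The maximum value appearing in the sequence `α`. -/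
def codeMax {k : ℕ} (α : Fin k → ℕ) : ℕ := Finset.univ.sup α

/-- `(α, f)` is a Stembridge code of length `k`. -/
def IsStembridgeCode (k : ℕ) (α : Fin k → ℕ) (f : ℕ → ℕ) : Prop :=
  (∀ j, 1 ≤ j → j ≤ codeMax α →
      1 ≤ f j ∧ f j + 1 ≤ (Finset.univ.filter (fun i => α i = j)).card) ∧
  (∀ j, j = 0 ∨ codeMax α < j → f j = 0)

/-- The index of a Stembridge code. -/
def codeIndex {k : ℕ} (α : Fin k → ℕ) (f : ℕ → ℕ) : ℕ :=
  ∑ j ∈ Finset.Icc 1 (codeMax α), f j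

/-!
An extended code is determined by its set `S` of finite positions together with the Stembridge
code of length `#S` obtained by reading it along `S` in increasing order, and the two have the
same index, except that `S = ∅` gives the all-`∞` code, of index `-1`. Summing over `S`, the
`C(n, k)` subsets of size `k` each contribute a copy of `Code_k`.
-/

open Finset Function

section StembridgeCode

variable {k : ℕ} {β : Fin k → ℕ} {f : ℕ → ℕ}

lemma le_codeMax (β : Fin k → ℕ) (i : Fin k) : β i ≤ codeMax β :=
  le_sup (mem_univ i)

lemma IsStembridgeCode.le_codeIndex (h : IsStembridgeCode k β f) (t : ℕ) :
    f t ≤ codeIndex β f := by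
  by_cases ht : t = 0 ∨ codeMax β < t
  · simp [h.2 t ht]
  · exact single_le_sum (fun _ _ => Nat.zero_le _) (mem_Icc.2 (by omega))

lemma IsStembridgeCode.codeMax_le_codeIndex (h : IsStembridgeCode k β f) :
    codeMax β ≤ codeIndex β f :=
  calc codeMax β = ∑ _j ∈ Icc 1 (codeMax β), 1 := by simp
    _ ≤ codeIndex β f := sum_le_sum fun j hj => (h.1 j (mem_Icc.1 hj).1 (mem_Icc.1 hj).2).1

/-- All values of a code of index at most `m` lie in `[0, m]`, and its marks vanish above `m`. -/
lemma finite_setOf_isStembridgeCode_codeIndex_le (k m : ℕ) :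
    {q : (Fin k → ℕ) × (ℕ → ℕ) |
      IsStembridgeCode k q.1 q.2 ∧ codeIndex q.1 q.2 ≤ m}.Finite := by
  refine (Set.finite_range fun g : (Fin k → Fin (m + 1)) × (Fin (m + 1) → Fin (m + 1)) =>
    ((fun i => (g.1 i : ℕ)),
      fun t => if h : t < m + 1 then (g.2 ⟨t, h⟩ : ℕ) else 0)).subset ?_
  rintro ⟨β, f⟩ ⟨hcode, hind⟩
  dsimp only at hcode hind
  have hβ (i : Fin k) : β i < m + 1 :=
    Nat.lt_succ_of_le ((le_codeMax β i).trans (hcode.codeMax_le_codeIndex.trans hind))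
  have hf (t : ℕ) : f t < m + 1 := Nat.lt_succ_of_le ((hcode.le_codeIndex t).trans hind)
  refine ⟨(fun i => ⟨β i, hβ i⟩, fun t => ⟨f t, hf t⟩),
    Prod.ext rfl (funext fun t => ?_)⟩
  by_cases ht : t < m + 1
  · simp [ht]
  · have := hcode.codeMax_le_codeIndex
    simp [ht, hcode.2 t (Or.inr (by omega))]

lemma codeMax_fin_zero (β : Fin 0 → ℕ) : codeMax β = 0 := by
  simp [codeMax]

lemma codeIndex_fin_zero (β : Fin 0 → ℕ) (f : ℕ → ℕ) : codeIndex β f = 0 := by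
  simp [codeIndex, codeMax_fin_zero]

lemma card_isStembridgeCode_fin_zero :
    Nat.card {q : (Fin 0 → ℕ) × (ℕ → ℕ) // IsStembridgeCode 0 q.1 q.2} = 1 := by
  have hcode (q : (Fin 0 → ℕ) × (ℕ → ℕ)) : IsStembridgeCode 0 q.1 q.2 ↔ q.2 = 0 := by
    simp only [IsStembridgeCode, codeMax_fin_zero, funext_iff, Pi.zero_apply]
    exact ⟨fun h t => h.2 t (by omega), fun h => ⟨fun j _ _ => by omega, fun t _ => h t⟩⟩
  rw [Nat.card_eq_one_iff_exists]
  exact ⟨⟨(finZeroElim, 0), (hcode _).2 rfl⟩,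
    fun q => Subtype.ext (Prod.ext (funext finZeroElim) ((hcode _).1 q.2))⟩

end StembridgeCode

def finiteSupport {n : ℕ} (α : Fin n → ℕ∞) : Finset (Fin n) := {i | α i ≠ ⊤}

noncomputable def padWithTop {k n : ℕ} (e : Fin k ↪ Fin n) (β : Fin k → ℕ) :
    Fin n → ℕ∞ :=
  extend e (fun i => (β i : ℕ∞)) fun _ => ⊤

section PadWithTop

variable {k n : ℕ} (e : Fin k ↪ Fin n) (β : Fin k → ℕ)

@[simp]
lemma padWithTop_apply_embedding (i : Fin k) : padWithTop e β (e i) = β i :=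
  e.injective.extend_apply _ _ i

lemma padWithTop_of_notMem_range {i : Fin n} (hi : i ∉ Set.range e) : padWithTop e β i = ⊤ :=
  extend_apply' _ _ i hi

lemma extMax_padWithTop : extMax (padWithTop e β) = codeMax β := by
  refine le_antisymm (Finset.sup_le fun i _ => ?_) (Finset.sup_le fun i _ => ?_)
  · by_cases hi : i ∈ Set.range e
    · obtain ⟨i, rfl⟩ := hi
      simpa using le_codeMax β i
    · simp [padWithTop_of_notMem_range e β hi]
  · simpa [extMax] using le_sup (f := fun i => (padWithTop e β i).toNat) (mem_univ (e i))

lemma filter_padWithTop_eq_natCast (t : ℕ) :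
    univ.filter (fun i => padWithTop e β i = (t : ℕ∞)) =
      (univ.filter fun i => β i = t).map e := by
  ext i
  by_cases hi : i ∈ Set.range e
  · obtain ⟨i, rfl⟩ := hi
    simp
  · simp only [Set.mem_range, not_exists] at hi
    simp [padWithTop_of_notMem_range e β (by simpa using hi), hi]

lemma isExtCode_padWithTop_iff (f : ℕ → ℕ) :
    IsExtCode n (padWithTop e β) f ↔ IsStembridgeCode k β f := by
  simp only [IsExtCode, IsStembridgeCode, extMax_padWithTop, filter_padWithTop_eq_natCast, card_map]

lemma finiteSupport_padWithTop : finiteSupport (padWithTop e β) = univ.map e := by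
  ext i
  by_cases hi : i ∈ Set.range e
  · obtain ⟨i, rfl⟩ := hi
    simp [finiteSupport]
  · simp only [Set.mem_range, not_exists] at hi
    simp [finiteSupport, padWithTop_of_notMem_range e β (by simpa using hi), hi]

lemma extIndP1_padWithTop (f : ℕ → ℕ) :
    extIndP1 (padWithTop e β) f = if k = 0 then 0 else codeIndex β f + 1 := by
  rcases Nat.eq_zero_or_pos k with rfl | hk
  · have (i : Fin n) : padWithTop e β i = ⊤ :=
      padWithTop_of_notMem_range e β fun ⟨a, _⟩ => a.elim0
    simp [extIndP1, this]
  · have hfin : ¬ ∀ i, padWithTop e β i = ⊤ := fun h => by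
      simpa using h (e ⟨0, hk⟩)
    rw [extIndP1, if_neg hfin, if_neg hk.ne', extMax_padWithTop, codeIndex]

end PadWithTop

def restrictAlong {k n : ℕ} (e : Fin k ↪ Fin n) (α : Fin n → ℕ∞) (i : Fin k) : ℕ :=
  (α (e i)).toNat

section RestrictAlong

variable {k n : ℕ} (e : Fin k ↪ Fin n)

lemma restrictAlong_padWithTop (β : Fin k → ℕ) : restrictAlong e (padWithTop e β) = β := by
  funext i
  rw [restrictAlong, padWithTop_apply_embedding, ENat.toNat_natCast]

lemma padWithTop_restrictAlong {α : Fin n → ℕ∞} (hα : finiteSupport α = univ.map e) :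
    padWithTop e (restrictAlong e α) = α := by
  have hmem (i : Fin n) : i ∈ univ.map e ↔ α i ≠ ⊤ := by simp [← hα, finiteSupport]
  funext i
  by_cases hi : i ∈ univ.map e
  · obtain ⟨i, -, rfl⟩ := mem_map.1 hi
    rw [padWithTop_apply_embedding, restrictAlong, ENat.natCast_toNat ((hmem _).1 hi)]
  · rw [padWithTop_of_notMem_range _ _ (by simpa using hi)]
    exact (not_not.1 (mt (hmem i).2 hi)).symm

end RestrictAlong

/-- `if k = 0 then 0 else codeIndex + 1` is `ind + 1` of the `∞`-padding of a code of length
`k`: padding the empty code gives the all-`∞` code, of index `-1`. -/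
def paddedCodes (k j : ℕ) : Set ((Fin k → ℕ) × (ℕ → ℕ)) :=
  {q | IsStembridgeCode k q.1 q.2 ∧ (if k = 0 then 0 else codeIndex q.1 q.2 + 1) = j}

lemma finite_paddedCodes (k j : ℕ) : (paddedCodes k j).Finite := by
  refine (finite_setOf_isStembridgeCode_codeIndex_le k j).subset ?_
  rintro ⟨β, f⟩ ⟨hcode, hind⟩
  refine ⟨hcode, ?_⟩
  split_ifs at hind with hk
  · subst hk
    simp [codeIndex_fin_zero]
  · omega

lemma card_paddedCodes_zero (j : ℕ) : Nat.card (paddedCodes 0 j) = if j = 0 then 1 else 0 := by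
  rcases eq_or_ne j 0 with rfl | hj
  · rw [if_pos rfl, ← card_isStembridgeCode_fin_zero]
    exact Nat.card_congr (Equiv.subtypeEquivRight fun q => by simp [paddedCodes])
  · simp [paddedCodes, hj, Ne.symm hj]

lemma card_paddedCodes_of_ne_zero {k : ℕ} (hk : k ≠ 0) (j : ℕ) :
    Nat.card (paddedCodes k j) = if j = 0 then 0 else
      Nat.card {q : (Fin k → ℕ) × (ℕ → ℕ) //
        IsStembridgeCode k q.1 q.2 ∧ codeIndex q.1 q.2 = j - 1} := by
  rcases eq_or_ne j 0 with rfl | hj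
  · simp [paddedCodes, hk]
  · rw [if_neg hj]
    exact Nat.card_congr (Equiv.subtypeEquivRight fun q => and_congr_right fun _ => by
      rw [if_neg hk]
      omega)

noncomputable def extCodeFiberEquiv {k n : ℕ} (j : ℕ) (e : Fin k ↪ Fin n) :
    {p : (Fin n → ℕ∞) × (ℕ → ℕ) //
        (IsExtCode n p.1 p.2 ∧ extIndP1 p.1 p.2 = j) ∧ finiteSupport p.1 = univ.map e} ≃
      paddedCodes k j where
  toFun p := ⟨(restrictAlong e p.1.1, p.1.2), by
    obtain ⟨⟨hcode, hind⟩, he⟩ := p.2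
    rw [← padWithTop_restrictAlong e he, isExtCode_padWithTop_iff] at hcode
    rw [← padWithTop_restrictAlong e he, extIndP1_padWithTop] at hind
    exact ⟨hcode, hind⟩⟩
  invFun q := ⟨(padWithTop e q.1.1, q.1.2), by
    rw [isExtCode_padWithTop_iff, extIndP1_padWithTop, finiteSupport_padWithTop]
    exact ⟨q.2, rfl⟩⟩
  left_inv p := Subtype.ext (Prod.ext (padWithTop_restrictAlong e p.2.2) rfl)
  right_inv q := Subtype.ext (Prod.ext (restrictAlong_padWithTop e q.1.1) rfl)

lemma card_extCodes_eq_sum_choose (n j : ℕ) :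
    Nat.card {p : (Fin n → ℕ∞) × (ℕ → ℕ) //
        IsExtCode n p.1 p.2 ∧ extIndP1 p.1 p.2 = j} =
      ∑ k ∈ range (n + 1), n.choose k * Nat.card (paddedCodes k j) := by
  have hfiber (S : Finset (Fin n)) := (Equiv.subtypeSubtypeEquivSubtypeInter
    (fun p : (Fin n → ℕ∞) × (ℕ → ℕ) => IsExtCode n p.1 p.2 ∧ extIndP1 p.1 p.2 = j)
    (fun p => finiteSupport p.1 = S)).trans <|
      (Equiv.subtypeEquivRight fun p => by rw [map_orderEmbOfFin_univ S rfl]).trans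
        (extCodeFiberEquiv j (S.orderEmbOfFin rfl).toEmbedding)
  have (k : ℕ) := (finite_paddedCodes k j).to_subtype
  have (S : Finset (Fin n)) := Finite.of_equiv _ (hfiber S).symm
  rw [← Nat.card_congr (Equiv.sigmaFiberEquiv fun p : {p : (Fin n → ℕ∞) × (ℕ → ℕ) //
      IsExtCode n p.1 p.2 ∧ extIndP1 p.1 p.2 = j} => finiteSupport p.1.1), Nat.card_sigma,
    sum_congr rfl fun S _ => Nat.card_congr (hfiber S), ← powerset_univ,
    sum_powerset_apply_card (fun k => Nat.card (paddedCodes k j)), card_univ, Fintype.card_fin]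
  simp only [smul_eq_mul]

/-- Coefficientwise form of
`Σ_{(α,f) ∈ extended codes of length n} t^{ind+1}
  = 1 + t·Σ_{k=1}^n C(n,k)·Σ_{(β,g) ∈ Code_k} t^{ind(β,g)}`:
for every `j`, the number of extended codes of length `n` with `ind + 1 = j`
is `1` if `j = 0` (the all-`∞` code) and otherwise equals
`Σ_{k=1}^n C(n,k)·|{(β,g) ∈ Code_k : ind(β,g) = j-1}|`. -/
theorem ext_codes_binomial_eulerian (n j : ℕ) :
    Nat.card {p : (Fin n → ℕ∞) × (ℕ → ℕ) //
        IsExtCode n p.1 p.2 ∧ extIndP1 p.1 p.2 = j} =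
      if j = 0 then 1 else
        ∑ k ∈ Finset.Icc 1 n, n.choose k *
          Nat.card {p : (Fin k → ℕ) × (ℕ → ℕ) //
            IsStembridgeCode k p.1 p.2 ∧ codeIndex p.1 p.2 = j - 1} := by
  rw [card_extCodes_eq_sum_choose, range_eq_Ico, sum_eq_sum_Ico_succ_bot (by omega), zero_add,
    Ico_add_one_right_eq_Icc, card_paddedCodes_zero,
    sum_congr rfl fun k hk => by rw [card_paddedCodes_of_ne_zero (by grind)]]
  split_ifs <;> simp
end
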